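/- Suppose r is even, and let φ : Cl ≃ Matrix (Fin 2^r) ℂ be any ℂ-algebra isomorphism with Φ the induced isomorphism of Cl ⊗ Cl onto Matrix ((Fin 2^r) × (Fin 2^r)) ℂ. Then for each ε ∈ {+1,−1}: Tr Φ(p_{ε,−ε}·P_{2m−1}) = (2r)!/((2m−1)!(2r−2m+1)!) for 1 ≤ m ≤ r/2; Tr Φ(p_{εε}·P_{2m}) = (2r)!/((2m)!(2r−2m)!) for 0 ≤ m ≤ r/2 − 1; and Tr Φ(p_{εε}·P_r) = (2r)!/(2·(r!)^2). -/

import Mathlib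

/-!
The elements `k_i = Γ_i ⊗ Γ_i` of `Cl ⊗ Cl` are pairwise commuting involutions and
`I₂ = (∑ k_i)² − 2r`, so the split Casimir is diagonal on the joint eigenprojections `e_T`
(`T ⊆ {1,…,2r}`, with `k_i = −1` exactly for `i ∈ T`) and acts on `e_T` by `c_{|T|} = c_{2r−|T|}`.
Hence `P_k` is the sum of the `e_T` with `|T| ∈ {k, 2r−k}`.

`Tr ∘ Φ` vanishes on every element anticommuting with a unit. The monomial `∏_{i∈S} k_i`,
`S ≠ ∅`, anticommutes with `Γ_j ⊗ Γ_{2r+1}` for `j ∈ S`, so every `e_T` has trace `1`; and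
`Γ_{2r+1} ⊗ 1`, `1 ⊗ Γ_{2r+1}` anticommute with each `k_i`, while `Γ_{2r+1} ⊗ Γ_{2r+1} = ∏ k_i`
for even `r`. Thus `Tr Φ(p_{εε'} e_T) = (1 + εε'(−1)^{|T|})/4`, and counting the sets `T` gives the
binomial coefficients.
-/

open scoped TensorProduct

noncomputable section

/-- The quadratic form `x₁² + ⋯ + x_{2r}²` on `ℂ^{2r}`. -/
def Qf (r : ℕ) : QuadraticForm ℂ (Fin (2*r) → ℂ) :=
  QuadraticMap.weightedSumSquares ℂ (fun _ : Fin (2*r) => (1:ℂ))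

/-- The Clifford algebra of `Qf r`. -/
abbrev Cl (r : ℕ) := CliffordAlgebra (Qf r)

/-- The generators `Γ_i`. -/
def Γgen (r : ℕ) (i : Fin (2*r)) : Cl r :=
  CliffordAlgebra.ι (Qf r) (Pi.single i 1)

/-- The antisymmetrised products `Γ_{[i₁…i_k]}`. -/
def Γbr (r k : ℕ) (i : Fin k → Fin (2*r)) : Cl r :=
  ((k.factorial : ℂ))⁻¹ •
    ∑ σ : Equiv.Perm (Fin k),
      ((Equiv.Perm.sign σ : ℤ) : ℂ) • (List.ofFn fun j => Γgen r (i (σ j))).prod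

/-- The invariants `I_k ∈ Cl ⊗ Cl`. -/
def Ik (r k : ℕ) : Cl r ⊗[ℂ] Cl r :=
  ∑ i : Fin k → Fin (2*r), (Γbr r k i) ⊗ₜ[ℂ] (Γbr r k i)

/-- The split Casimir element `Ĉ = −I₂/(16(2r−2))`. -/
def sC (r : ℕ) : Cl r ⊗[ℂ] Cl r := (-(16*(2*(r:ℂ)-2))⁻¹) • Ik r 2

/-- The top element `Γ_{2r+1} = (−i)^r Γ₁⋯Γ_{2r}`. -/
def Γtop (r : ℕ) : Cl r :=
  ((-Complex.I)^r) • (List.ofFn fun i : Fin (2*r) => Γgen r i).prod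

/-- The chirality projector `p_ε = (1 + ε Γ_{2r+1})/2`. -/
def pCh (r : ℕ) (ε : ℂ) : Cl r := (2:ℂ)⁻¹ • (1 + ε • Γtop r)

/-- The chirality projectors `p_{εε'} = p_ε ⊗ p_{ε'}`. -/
def ppCh (r : ℕ) (ε ε' : ℂ) : Cl r ⊗[ℂ] Cl r := (pCh r ε) ⊗ₜ[ℂ] (pCh r ε')

/-- The eigenvalues `c_k = (2k(2r−k) − r(2r−1))/(16(r−1))`. -/
def cEv (r k : ℕ) : ℂ :=
  (2*(k:ℂ)*(2*(r:ℂ)-(k:ℂ)) - (r:ℂ)*(2*(r:ℂ)-1)) / (16*((r:ℂ)-1))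

/-- The spectral projectors `P_k = Π_{j≠k} (Ĉ − c_j)/(c_k − c_j)`. -/
def Pk (r k : ℕ) : Cl r ⊗[ℂ] Cl r :=
  (((List.range (r+1)).filter (fun j => j ≠ k)).map
    (fun j => (cEv r k - cEv r j)⁻¹ • (sC r - cEv r j • 1))).prod

/-- `P_r^S = (p_{++} + p_{−−})·P_r`. -/
def PrS (r : ℕ) : Cl r ⊗[ℂ] Cl r := (ppCh r 1 1 + ppCh r (-1) (-1)) * Pk r r

/-- The ascending factorial `a_k(u) = (u/2)(u/2+1)⋯(u/2+k−1)`. -/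
def asc (u : ℂ) (k : ℕ) : ℂ := ∏ j ∈ Finset.range k, (u/2 + (j:ℂ))


open Finset
open scoped symmDiff

theorem Matrix.trace_algHom_eq_zero_of_anticommute {K A n : Type*} [Field K] [CharZero K]
    [Ring A] [Algebra K A] [Fintype n] [DecidableEq n] (Φ : A →ₐ[K] Matrix n n K) {u x : A}
    (hu : IsUnit u) (hux : u * x = -(x * u)) : Matrix.trace (Φ x) = 0 := by
  obtain ⟨v, rfl⟩ := hu
  have hconj : (v : A) * x * ↑v⁻¹ = -x := by
    rw [hux, neg_mul, mul_assoc, Units.mul_inv, mul_one]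
  have h := Matrix.trace_mul_comm (Φ (v * x)) (Φ ↑v⁻¹)
  rw [← map_mul, ← map_mul, hconj, ← mul_assoc, Units.inv_mul, one_mul, map_neg,
    Matrix.trace_neg] at h
  exact neg_eq_self.mp h

theorem IsUnit.tmul {R A B : Type*} [CommSemiring R] [Semiring A] [Algebra R A] [Semiring B]
    [Algebra R B] {a : A} {b : B} (ha : IsUnit a) (hb : IsUnit b) : IsUnit (a ⊗ₜ[R] b) := by
  simpa [Algebra.TensorProduct.tmul_mul_tmul] using
    (ha.map (Algebra.TensorProduct.includeLeft : A →ₐ[R] A ⊗[R] B)).mul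
      (hb.map (Algebra.TensorProduct.includeRight : B →ₐ[R] A ⊗[R] B))

theorem List.prod_map_tmul_prod_map {R A B ι : Type*} [CommSemiring R] [Semiring A] [Algebra R A]
    [Semiring B] [Algebra R B] (f : ι → A) (g : ι → B) (l : List ι) :
    (l.map f).prod ⊗ₜ[R] (l.map g).prod = (l.map fun i => f i ⊗ₜ[R] g i).prod := by
  induction l with
  | nil => rfl
  | cons a l ih => simp [← ih, Algebra.TensorProduct.tmul_mul_tmul]

theorem mul_list_prod_map_eq_smul {R A ι : Type*} [CommSemiring R] [Semiring A] [Algebra R A]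
    {u : A} {f : ι → A} {s : ι → R} (h : ∀ i, u * f i = s i • (f i * u)) (l : List ι) :
    u * (l.map f).prod = (l.map s).prod • ((l.map f).prod * u) := by
  induction l with
  | nil => simp
  | cons a l ih =>
    simp only [List.map_cons, List.prod_cons]
    rw [← mul_assoc, h, smul_mul_assoc, mul_assoc, ih, mul_smul_comm, smul_smul, mul_assoc]

theorem list_prod_map_smul_sub_mul_of_mul_eq_smul {K A ι : Type*} [CommRing K] [Ring A]
    [Algebra K A] {x e : A} {μ : K} (h : x * e = μ • e) (a b : ι → K) (L : List ι) :
    (L.map fun j => a j • (x - b j • 1)).prod * e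
      = (L.map fun j => a j * (μ - b j)).prod • e := by
  induction L with
  | nil => simp
  | cons j L ih =>
    simp only [List.map_cons, List.prod_cons]
    rw [mul_assoc, ih, mul_smul_comm, smul_mul_assoc, sub_mul, h, smul_mul_assoc, one_mul,
      ← sub_smul, smul_smul, smul_smul]
    congr 1
    ring

theorem Finset.apply_symmDiff_singleton {ι M : Type*} [DecidableEq ι] [Monoid M]
    {g : Finset ι → M} {i : ι} {a : M} (ha : a * a = 1)
    (hg : ∀ S, i ∉ S → g (insert i S) = a * g S) (S : Finset ι) :
    g (S ∆ {i}) = a * g S := by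
  by_cases hi : i ∈ S
  · have hS : S ∆ {i} = S.erase i := by
      ext j; by_cases hj : j = i <;> simp [Finset.mem_symmDiff, hj, hi]
    conv_rhs => rw [← Finset.insert_erase hi, hg _ (Finset.notMem_erase i S), ← mul_assoc, ha,
      one_mul]
    rw [hS]
  · have hS : S ∆ {i} = insert i S := by
      ext j; by_cases hj : j = i <;> simp [Finset.mem_symmDiff, hj, hi]
    rw [hS, hg S hi]

theorem Finset.card_filter_card_eq {ι : Type*} [Fintype ι] [DecidableEq ι] (k : ℕ) :
    #{T : Finset ι | #T = k} = (Fintype.card ι).choose k := by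
  rw [← Finset.powerset_univ, ← Finset.powersetCard_eq_filter, Finset.card_powersetCard,
    Finset.card_univ]

section InvolutionMonomials

variable {M ι : Type*} [Monoid M] {k : ι → M} (hk : Pairwise fun i j => Commute (k i) (k j))

def involMonomial (S : Finset ι) : M := S.noncommProd k (hk.set_pairwise _)

theorem involMonomial_empty : involMonomial hk ∅ = 1 := rfl

variable [DecidableEq ι]

theorem involMonomial_insert {i : ι} {S : Finset ι} (hi : i ∉ S) :
    involMonomial hk (insert i S) = k i * involMonomial hk S :=
  Finset.noncommProd_insert_of_notMem _ _ _ _ hi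

theorem involMonomial_eq_mul_erase {i : ι} {S : Finset ι} (hi : i ∈ S) :
    involMonomial hk S = k i * involMonomial hk (S.erase i) :=
  (Finset.mul_noncommProd_erase _ hi _ _).symm

theorem mul_involMonomial_eq_neg [HasDistribNeg M] {u : M} {i : ι} {S : Finset ι} (hi : i ∈ S)
    (hui : u * k i = -(k i * u)) (hu : ∀ j ≠ i, Commute u (k j)) :
    u * involMonomial hk S = -(involMonomial hk S * u) := by
  have hcomm : Commute u (involMonomial hk (S.erase i)) :=
    Finset.noncommProd_commute _ _ _ _ fun j hj => hu j (Finset.ne_of_mem_erase hj)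
  rw [involMonomial_eq_mul_erase hk hi, ← mul_assoc, hui, neg_mul, mul_assoc, hcomm.eq,
    ← mul_assoc]

theorem mul_involMonomial (hsq : ∀ i, k i * k i = 1) (i : ι) (S : Finset ι) :
    k i * involMonomial hk S = involMonomial hk (S ∆ {i}) :=
  (Finset.apply_symmDiff_singleton (hsq i) (fun _ => involMonomial_insert hk) S).symm

end InvolutionMonomials

section SignCharacter

variable {R ι : Type*} [CommRing R] [DecidableEq ι]

def signChar (S T : Finset ι) : R := (-1) ^ #(S ∩ T)

theorem signChar_comm (S T : Finset ι) : (signChar S T : R) = signChar T S := by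
  rw [signChar, signChar, Finset.inter_comm]

theorem signChar_insert {i : ι} {S : Finset ι} (hi : i ∉ S) (T : Finset ι) :
    (signChar (insert i S) T : R) = (if i ∈ T then -1 else 1) * signChar S T := by
  unfold signChar
  split_ifs with hiT
  · rw [Finset.insert_inter_of_mem hiT,
      Finset.card_insert_of_notMem fun h => hi (Finset.mem_of_mem_inter_left h), pow_succ']
  · rw [Finset.insert_inter_of_notMem hiT, one_mul]

theorem signChar_symmDiff_singleton (i : ι) (S T : Finset ι) :
    (signChar (S ∆ {i}) T : R) = (if i ∈ T then -1 else 1) * signChar S T :=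
  Finset.apply_symmDiff_singleton (g := fun S => (signChar S T : R)) (by split_ifs <;> simp)
    (fun _ hi => signChar_insert hi T) S

theorem sum_signChar [Fintype ι] [IsAddTorsionFree R] (S : Finset ι) :
    ∑ T, (signChar S T : R) = if S = ∅ then 2 ^ Fintype.card ι else 0 := by
  split_ifs with hS
  · simp [hS, signChar, Finset.card_univ]
  · obtain ⟨i, hi⟩ := Finset.nonempty_iff_ne_empty.mpr hS
    refine self_eq_neg.mp ?_
    calc ∑ T, (signChar S T : R) = ∑ T, signChar S (T ∆ {i}) :=
          Fintype.sum_bijective _ (symmDiff_left_involutive {i}).bijective _ _ fun _ => by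
            rw [symmDiff_symmDiff_cancel_right]
      _ = -∑ T, signChar S T := by
          simp only [signChar_comm S, signChar_symmDiff_singleton, if_pos hi, neg_one_mul,
            Finset.sum_neg_distrib]

end SignCharacter

section JointEigenIdempotents

variable {K A ι : Type*} [Field K] [Ring A] [Algebra K A] [Fintype ι] [DecidableEq ι]
  {k : ι → A} (hk : Pairwise fun i j => Commute (k i) (k j))

variable (K) in
/-- The joint eigenprojection of the involutions `k i` on which `k i` acts by `-1` exactly for
`i ∈ T`. -/
def jointEigenIdem (T : Finset ι) : A :=
  ((2 : K) ^ Fintype.card ι)⁻¹ • ∑ S, (signChar S T : K) • involMonomial hk S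

theorem commute_jointEigenIdem (i : ι) (T : Finset ι) :
    Commute (k i) (jointEigenIdem K hk T) := by
  refine ((Commute.sum_right _ _ _ fun S _ => ?_).smul_right _)
  refine (Finset.noncommProd_commute _ _ _ _ fun j _ => ?_).smul_right _
  rcases eq_or_ne i j with rfl | hij
  exacts [Commute.refl _, hk hij]

variable (hsq : ∀ i, k i * k i = 1)
include hsq

theorem mul_jointEigenIdem (i : ι) (T : Finset ι) :
    k i * jointEigenIdem K hk T = (if i ∈ T then -1 else 1 : K) • jointEigenIdem K hk T := by
  have hflip : ∑ S, (signChar S T : K) • involMonomial hk (S ∆ {i})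
      = ∑ S, (signChar (S ∆ {i}) T : K) • involMonomial hk S :=
    Fintype.sum_bijective _ (symmDiff_left_involutive {i}).bijective _ _ fun S => by
      rw [symmDiff_symmDiff_cancel_right]
  simp only [jointEigenIdem, mul_smul_comm, Finset.mul_sum, mul_involMonomial hk hsq]
  rw [hflip, smul_comm]
  simp only [signChar_symmDiff_singleton, mul_smul, ← Finset.smul_sum]

theorem involMonomial_mul_jointEigenIdem (S T : Finset ι) :
    involMonomial hk S * jointEigenIdem K hk T = (signChar S T : K) • jointEigenIdem K hk T := by
  induction S using Finset.induction_on with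
  | empty => simp [involMonomial_empty, signChar]
  | insert i S hi ih =>
    rw [involMonomial_insert hk hi, mul_assoc, ih, mul_smul_comm, mul_jointEigenIdem hk hsq,
      smul_smul, signChar_insert hi, mul_comm]

theorem sum_mul_jointEigenIdem (T : Finset ι) :
    (∑ i, k i) * jointEigenIdem K hk T
      = ((Fintype.card ι : K) - 2 * #T) • jointEigenIdem K hk T := by
  simp only [Finset.sum_mul, mul_jointEigenIdem hk hsq, ← Finset.sum_smul]
  congr 1
  rw [← Finset.sum_add_sum_compl T, Finset.sum_congr rfl fun i hi => if_pos hi,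
    Finset.sum_congr rfl fun i hi => if_neg (Finset.mem_compl.mp hi)]
  simp [Finset.card_compl, Nat.cast_sub (Finset.card_le_univ T)]
  ring

theorem trace_mul_jointEigenIdem_of_anticommute [CharZero K] {n : Type*} [Fintype n]
    [DecidableEq n] (Φ : A →ₐ[K] Matrix n n K) {x : A} {i : ι} (hx : k i * x = -(x * k i))
    (T : Finset ι) : Matrix.trace (Φ (x * jointEigenIdem K hk T)) = 0 :=
  Matrix.trace_algHom_eq_zero_of_anticommute Φ ⟨⟨_, _, hsq i, hsq i⟩, rfl⟩ <| by
    rw [← mul_assoc, hx, neg_mul, mul_assoc, (commute_jointEigenIdem hk i T).eq, mul_assoc]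

omit hsq in
theorem sum_jointEigenIdem [CharZero K] : ∑ T, jointEigenIdem K hk T = 1 := by
  simp only [jointEigenIdem, ← Finset.smul_sum]
  rw [Finset.sum_comm]
  simp [← Finset.sum_smul, sum_signChar, ite_smul, involMonomial_empty]

omit hsq in
theorem trace_jointEigenIdem {n : Type*} [Fintype n] [DecidableEq n] (Φ : A →ₐ[K] Matrix n n K)
    (hΦ : ∀ S : Finset ι, S.Nonempty → Matrix.trace (Φ (involMonomial hk S)) = 0)
    (T : Finset ι) :
    Matrix.trace (Φ (jointEigenIdem K hk T))
      = ((2 : K) ^ Fintype.card ι)⁻¹ * Fintype.card n := by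
  rw [jointEigenIdem, map_smul, Matrix.trace_smul, map_sum, Matrix.trace_sum,
    Finset.sum_eq_single ∅ (fun S _ hS => by
      rw [map_smul, Matrix.trace_smul, hΦ S (Finset.nonempty_iff_ne_empty.mpr hS), smul_zero])
      (fun h => absurd (Finset.mem_univ _) h)]
  simp [signChar, involMonomial_empty]

end JointEigenIdempotents

section Clifford

variable {r : ℕ}

theorem Γgen_mul_self (i : Fin (2*r)) : Γgen r i * Γgen r i = 1 := by
  rw [Γgen, CliffordAlgebra.ι_sq_scalar, ← map_one (algebraMap ℂ (Cl r))]
  congr 1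
  simp [Qf, QuadraticMap.weightedSumSquares_apply, Pi.single_apply]

theorem Γgen_mul_Γgen_of_ne {i j : Fin (2*r)} (h : i ≠ j) :
    Γgen r i * Γgen r j = -(Γgen r j * Γgen r i) := by
  refine CliffordAlgebra.ι_mul_ι_comm_of_isOrtho (QuadraticMap.isOrtho_def.mpr ?_)
  simp [Qf, QuadraticMap.weightedSumSquares_apply, Pi.single_apply, mul_add,
    Finset.sum_add_distrib, h, h.symm]

theorem isUnit_Γgen (i : Fin (2*r)) : IsUnit (Γgen r i) :=
  ⟨⟨_, _, Γgen_mul_self i, Γgen_mul_self i⟩, rfl⟩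

theorem Γgen_mul_Γtop (j : Fin (2*r)) : Γgen r j * Γtop r = -(Γtop r * Γgen r j) := by
  have hsign (i : Fin (2*r)) :
      Γgen r j * Γgen r i = (if i = j then 1 else -1 : ℂ) • (Γgen r i * Γgen r j) := by
    split_ifs with h
    · rw [h, one_smul]
    · rw [Γgen_mul_Γgen_of_ne (Ne.symm h), neg_one_smul]
  have hprod : ∏ i : Fin (2*r), (if i = j then 1 else -1 : ℂ) = -1 := by
    have hodd : Odd (2*r - 1) := ⟨r - 1, by have := j.pos; omega⟩
    simp [Finset.prod_ite, Finset.filter_ne', hodd.neg_one_pow]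
  rw [Γtop, mul_smul_comm, smul_mul_assoc, List.ofFn_eq_map, mul_list_prod_map_eq_smul hsign,
    ← List.ofFn_eq_map, List.prod_ofFn, hprod, neg_one_smul, smul_neg]

theorem isUnit_Γtop (r : ℕ) : IsUnit (Γtop r) := by
  have hc : (-Complex.I) ^ r ≠ 0 := pow_ne_zero _ (neg_ne_zero.mpr Complex.I_ne_zero)
  have hprod : IsUnit (List.ofFn fun i => Γgen r i).prod :=
    List.prod_isUnit (by simp [isUnit_Γgen])
  simpa [Γtop, Units.smul_def] using hprod.smul (Units.mk0 _ hc)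

def Γdiag (r : ℕ) (i : Fin (2*r)) : Cl r ⊗[ℂ] Cl r := Γgen r i ⊗ₜ[ℂ] Γgen r i

theorem Γdiag_mul_self (i : Fin (2*r)) : Γdiag r i * Γdiag r i = 1 := by
  rw [Γdiag, Algebra.TensorProduct.tmul_mul_tmul, Γgen_mul_self, Algebra.TensorProduct.one_def]

theorem commute_Γdiag (r : ℕ) : Pairwise fun i j => Commute (Γdiag r i) (Γdiag r j) := by
  intro i j h
  simp only [Commute, SemiconjBy, Γdiag, Algebra.TensorProduct.tmul_mul_tmul,
    Γgen_mul_Γgen_of_ne h, TensorProduct.neg_tmul, TensorProduct.tmul_neg, neg_neg]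

theorem Γbr_two (i : Fin 2 → Fin (2*r)) :
    Γbr r 2 i = if i 0 = i 1 then 0 else Γgen r (i 0) * Γgen r (i 1) := by
  have huniv : (Finset.univ : Finset (Equiv.Perm (Fin 2))) = {1, Equiv.swap 0 1} := by decide
  rw [Γbr, huniv, Finset.sum_pair (by decide), Equiv.Perm.sign_swap (by decide)]
  simp only [Equiv.Perm.sign_one, Equiv.Perm.one_apply, Equiv.swap_apply_left,
    Equiv.swap_apply_right, List.ofFn_succ, List.ofFn_zero, List.prod_cons, List.prod_nil,
    mul_one, Units.val_one, Units.val_neg, Int.cast_one, Int.cast_neg, one_smul, neg_smul,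
    Nat.factorial_two, Fin.succ_zero_eq_one, Fin.isValue]
  split_ifs with h
  · rw [h, add_neg_cancel, smul_zero]
  · rw [Γgen_mul_Γgen_of_ne (Ne.symm h), neg_neg, ← two_smul ℂ, smul_smul]
    norm_num

theorem Ik_two :
    Ik r 2 = (∑ i, Γdiag r i) * (∑ i, Γdiag r i) - (2 * r : ℂ) • 1 := by
  let pair := (piFinTwoEquiv fun _ => Fin (2*r)).symm
  have hsplit (a b : Fin (2*r)) : Γbr r 2 (pair (a, b)) ⊗ₜ[ℂ] Γbr r 2 (pair (a, b))
      = Γdiag r a * Γdiag r b - if a = b then 1 else 0 := by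
    rcases eq_or_ne a b with rfl | h
    · simp [pair, Γbr_two, Γdiag_mul_self]
    · simp [pair, Γbr_two, h, Γdiag, Algebra.TensorProduct.tmul_mul_tmul]
  rw [Ik, ← pair.sum_comp, Fintype.sum_prod_type]
  simp only [hsplit, Finset.sum_sub_distrib, Finset.sum_ite_eq, Finset.mem_univ, if_true,
    Finset.sum_const, Finset.card_univ, Fintype.card_fin, Finset.sum_mul_sum]
  rw [← Nat.cast_smul_eq_nsmul ℂ, Nat.cast_mul, Nat.cast_ofNat]

local notation "eT" => jointEigenIdem ℂ (commute_Γdiag _)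

theorem sC_mul_eT (hr : 2 ≤ r) (T : Finset (Fin (2*r))) : sC r * eT T = cEv r #T • eT T := by
  have hK := sum_mul_jointEigenIdem (K := ℂ) (commute_Γdiag r) Γdiag_mul_self T
  rw [Fintype.card_fin, Nat.cast_mul, Nat.cast_ofNat] at hK
  have hr1 : (r : ℂ) - 1 ≠ 0 := sub_ne_zero.mpr (by exact_mod_cast (by omega : r ≠ 1))
  rw [sC, Ik_two, smul_mul_assoc, sub_mul, mul_assoc, hK, mul_smul_comm, hK, smul_smul,
    smul_mul_assoc, one_mul, ← sub_smul, smul_smul, cEv]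
  congr 1
  field_simp
  ring

theorem cEv_eq_cEv_iff (hr : 2 ≤ r) {a b : ℕ} :
    cEv r a = cEv r b ↔ a = b ∨ a + b = 2 * r := by
  have hr1 : (16 * ((r : ℂ) - 1)) ≠ 0 :=
    mul_ne_zero (by norm_num) (sub_ne_zero.mpr (by exact_mod_cast (by omega : r ≠ 1)))
  have hfactor :
      cEv r a - cEv r b = 2 * ((a : ℂ) - b) * (2 * r - a - b) / (16 * ((r : ℂ) - 1)) := by
    rw [cEv, cEv]
    ring
  rw [← sub_eq_zero, hfactor, div_eq_zero_iff, or_iff_left hr1, mul_eq_zero, mul_eq_zero,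
    or_iff_right two_ne_zero, sub_eq_zero, sub_sub, sub_eq_zero, eq_comm (a := (2 * r : ℂ))]
  exact_mod_cast Iff.rfl

theorem Pk_mul_eT (hr : 2 ≤ r) {k : ℕ} (hk : k ≤ r) (T : Finset (Fin (2*r))) :
    Pk r k * eT T = if #T = k ∨ #T = 2*r - k then eT T else 0 := by
  have hT : #T ≤ 2 * r := by simpa using Finset.card_le_univ T
  rw [Pk, list_prod_map_smul_sub_mul_of_mul_eq_smul (sC_mul_eT hr T)
    (fun j => (cEv r k - cEv r j)⁻¹) (cEv r)]
  split_ifs with hTk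
  · rw [List.prod_eq_one, one_smul]
    simp only [List.mem_map, List.mem_filter, List.mem_range]
    rintro _ ⟨j, ⟨hj, hjk⟩, rfl⟩
    have hck : cEv r #T = cEv r k := (cEv_eq_cEv_iff hr).mpr (by omega)
    have hjk' : cEv r k ≠ cEv r j := by
      rw [Ne, cEv_eq_cEv_iff hr]; simp at hjk; omega
    rw [hck, inv_mul_cancel₀ (sub_ne_zero.mpr hjk')]
  · rw [List.prod_eq_zero, zero_smul]
    simp only [List.mem_map, List.mem_filter, List.mem_range]
    refine ⟨min #T (2 * r - #T), ⟨by omega, by simp; omega⟩, ?_⟩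
    rw [(cEv_eq_cEv_iff hr (a := #T) (b := min #T (2 * r - #T))).mpr (by omega), sub_self,
      mul_zero]

theorem Pk_eq_sum (hr : 2 ≤ r) {k : ℕ} (hk : k ≤ r) :
    Pk r k = ∑ T with #T = k ∨ #T = 2*r - k, eT T := by
  rw [Finset.sum_filter, ← Finset.sum_congr rfl fun T _ => Pk_mul_eT hr hk T, ← Finset.mul_sum,
    sum_jointEigenIdem, mul_one]

theorem trace_involMonomial_Γdiag {n : Type*} [Fintype n] [DecidableEq n]
    (Φ : Cl r ⊗[ℂ] Cl r →ₐ[ℂ] Matrix n n ℂ) {S : Finset (Fin (2*r))}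
    (hS : S.Nonempty) :
    Matrix.trace (Φ (involMonomial (commute_Γdiag r) S)) = 0 := by
  obtain ⟨j, hj⟩ := hS
  refine Matrix.trace_algHom_eq_zero_of_anticommute Φ ((isUnit_Γgen j).tmul (isUnit_Γtop r))
    (mul_involMonomial_eq_neg _ hj ?_ fun i hij => ?_)
  · simp only [Γdiag, Algebra.TensorProduct.tmul_mul_tmul, Γgen_mul_self, Γgen_mul_Γtop,
      TensorProduct.tmul_neg, neg_neg]
  · simp only [Commute, SemiconjBy, Γdiag, Algebra.TensorProduct.tmul_mul_tmul,
      Γgen_mul_Γgen_of_ne hij.symm, Γgen_mul_Γtop, TensorProduct.tmul_neg,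
      TensorProduct.neg_tmul]

variable
  (Φ : Cl r ⊗[ℂ] Cl r →ₐ[ℂ] Matrix (Fin (2^r) × Fin (2^r)) (Fin (2^r) × Fin (2^r)) ℂ)

theorem trace_eT (T : Finset (Fin (2*r))) : Matrix.trace (Φ (eT T)) = 1 := by
  rw [trace_jointEigenIdem _ Φ (fun S hS => trace_involMonomial_Γdiag Φ hS)]
  simp [Fintype.card_prod, pow_mul', sq]
  field_simp

theorem Γtop_tmul_Γtop (hre : Even r) :
    Γtop r ⊗ₜ[ℂ] Γtop r = involMonomial (commute_Γdiag r) Finset.univ := by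
  rw [involMonomial, ← List.toFinset_finRange,
    Finset.noncommProd_toFinset _ _ _ (List.nodup_finRange _), Γtop, TensorProduct.smul_tmul_smul,
    ← mul_pow, neg_mul_neg, Complex.I_mul_I, hre.neg_one_pow,
    one_smul, List.ofFn_eq_map, List.prod_map_tmul_prod_map]
  rfl

theorem ppCh_eq (ε ε' : ℂ) :
    ppCh r ε ε' = (4⁻¹ : ℂ) • (1 + ε • (Γtop r ⊗ₜ[ℂ] 1) + ε' • ((1 : Cl r) ⊗ₜ[ℂ] Γtop r)
        + (ε * ε') • (Γtop r ⊗ₜ[ℂ] Γtop r)) := by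
  simp only [ppCh, pCh, TensorProduct.add_tmul, TensorProduct.tmul_add,
    ← TensorProduct.smul_tmul', TensorProduct.tmul_smul, ← Algebra.TensorProduct.one_def]
  module

theorem trace_ppCh_mul_eT (hr : 0 < r) (hre : Even r) (ε ε' : ℂ) (T : Finset (Fin (2*r))) :
    Matrix.trace (Φ (ppCh r ε ε' * eT T)) = 4⁻¹ * (1 + ε * ε' * (-1) ^ #T) := by
  let j : Fin (2*r) := ⟨0, by omega⟩
  have hleft := trace_mul_jointEigenIdem_of_anticommute (commute_Γdiag r) Γdiag_mul_self Φ
    (x := Γtop r ⊗ₜ[ℂ] 1) (i := j) (by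
      simp only [Γdiag, Algebra.TensorProduct.tmul_mul_tmul, Γgen_mul_Γtop,
        TensorProduct.neg_tmul, one_mul, mul_one]) T
  have hright := trace_mul_jointEigenIdem_of_anticommute (commute_Γdiag r) Γdiag_mul_self Φ
    (x := 1 ⊗ₜ[ℂ] Γtop r) (i := j) (by
      simp only [Γdiag, Algebra.TensorProduct.tmul_mul_tmul, Γgen_mul_Γtop,
        TensorProduct.tmul_neg, one_mul, mul_one]) T
  have hboth : Matrix.trace (Φ ((Γtop r ⊗ₜ[ℂ] Γtop r) * eT T)) = (-1) ^ #T := by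
    rw [Γtop_tmul_Γtop hre, involMonomial_mul_jointEigenIdem _ Γdiag_mul_self, map_smul,
      Matrix.trace_smul, trace_eT Φ, signChar, Finset.univ_inter, smul_eq_mul, mul_one]
  simp only [ppCh_eq, smul_mul_assoc, add_mul, one_mul, map_smul, map_add, Matrix.trace_smul,
    Matrix.trace_add, hleft, hright, hboth, trace_eT Φ, smul_eq_mul]
  ring

theorem card_filter_card_eq_or_eq_sub {k : ℕ} (hk : k ≤ r) :
    #{T : Finset (Fin (2*r)) | #T = k ∨ #T = 2*r - k}
      = if k = r then (2*r).choose r else 2 * (2*r).choose k := by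
  split_ifs with hkr
  · subst hkr
    simp only [show 2 * k - k = k by omega, or_self, Finset.card_filter_card_eq, Fintype.card_fin]
  · rw [Finset.filter_or, Finset.card_union_of_disjoint
      (Finset.disjoint_filter.mpr fun T _ (h1 : #T = k) h2 => hkr (by omega)),
      Finset.card_filter_card_eq, Finset.card_filter_card_eq, Fintype.card_fin,
      Nat.choose_symm (by omega)]
    omega

theorem trace_ppCh_mul_Pk (hr : 2 ≤ r) (hre : Even r) (ε ε' : ℂ) {k : ℕ} (hk : k ≤ r) :
    Matrix.trace (Φ (ppCh r ε ε' * Pk r k))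
      = #{T : Finset (Fin (2*r)) | #T = k ∨ #T = 2*r - k}
          * (4⁻¹ * (1 + ε * ε' * (-1) ^ k)) := by
  rw [Pk_eq_sum hr hk, Finset.mul_sum, map_sum, Matrix.trace_sum, ← nsmul_eq_mul,
    ← Finset.sum_const]
  refine Finset.sum_congr rfl fun T hT => ?_
  have hpar : #T % 2 = k % 2 := by
    rw [Finset.mem_filter] at hT
    omega
  rw [trace_ppCh_mul_eT Φ (by omega) hre, neg_one_pow_eq_pow_mod_two, hpar,
    ← neg_one_pow_eq_pow_mod_two]

end Clifford

theorem proj_traces_even_r_general (r : ℕ) (hr : 2 ≤ r) (hre : Even r)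
    (Φ : Cl r ⊗[ℂ] Cl r →ₐ[ℂ] Matrix (Fin (2^r) × Fin (2^r)) (Fin (2^r) × Fin (2^r)) ℂ)
    (ε : ℂ) (hε : ε = 1 ∨ ε = -1) :
    (∀ m : ℕ, 1 ≤ m → m ≤ r/2 →
      Matrix.trace (Φ (ppCh r ε (-ε) * Pk r (2*m-1)))
        = ((2*r).factorial : ℂ) / (((2*m-1).factorial : ℂ) * ((2*r-2*m+1).factorial : ℂ))) ∧
    (∀ m : ℕ, m ≤ r/2 - 1 →
      Matrix.trace (Φ (ppCh r ε ε * Pk r (2*m)))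
        = ((2*r).factorial : ℂ) / (((2*m).factorial : ℂ) * ((2*r-2*m).factorial : ℂ))) ∧
    Matrix.trace (Φ (ppCh r ε ε * Pk r r))
        = ((2*r).factorial : ℂ) / (2 * ((r.factorial : ℂ))^2) := by
  have hεε : ε * ε = 1 := by rcases hε with rfl | rfl <;> norm_num
  obtain ⟨s, hs⟩ := hre
  refine ⟨fun m hm1 hm2 => ?_, fun m hm => ?_, ?_⟩
  · rw [trace_ppCh_mul_Pk Φ hr ⟨s, hs⟩ ε (-ε) (by omega),
      card_filter_card_eq_or_eq_sub (by omega),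
      if_neg (by omega), Odd.neg_one_pow ⟨m - 1, by omega⟩, mul_neg ε ε, hεε, Nat.cast_mul,
      Nat.cast_choose ℂ (by omega), show 2 * r - (2 * m - 1) = 2 * r - 2 * m + 1 by omega]
    ring
  · rw [trace_ppCh_mul_Pk Φ hr ⟨s, hs⟩ ε ε (by omega),
      card_filter_card_eq_or_eq_sub (by omega),
      if_neg (by omega), Even.neg_one_pow ⟨m, by omega⟩, hεε, Nat.cast_mul,
      Nat.cast_choose ℂ (by omega)]
    ring
  · rw [trace_ppCh_mul_Pk Φ hr ⟨s, hs⟩ ε ε le_rfl, card_filter_card_eq_or_eq_sub le_rfl,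
      if_pos rfl, Even.neg_one_pow ⟨s, hs⟩, hεε, Nat.cast_choose ℂ (by omega),
      show 2 * r - r = r by omega]
    ring

/-- traces of the chiral spectral projectors for even `r`. -/
theorem proj_traces_even_r (r : ℕ) (hr : 2 ≤ r) (hre : Even r)
    (φ : Cl r ≃ₐ[ℂ] Matrix (Fin (2^r)) (Fin (2^r)) ℂ)
    (Φ : Cl r ⊗[ℂ] Cl r →ₐ[ℂ] Matrix (Fin (2^r) × Fin (2^r)) (Fin (2^r) × Fin (2^r)) ℂ)
    (hΦ : ∀ a b : Cl r, Φ (a ⊗ₜ[ℂ] b) = Matrix.kroneckerMap (· * ·) (φ a) (φ b))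
    (ε : ℂ) (hε : ε = 1 ∨ ε = -1) :
    (∀ m : ℕ, 1 ≤ m → m ≤ r/2 →
      Matrix.trace (Φ (ppCh r ε (-ε) * Pk r (2*m-1)))
        = ((2*r).factorial : ℂ) / (((2*m-1).factorial : ℂ) * ((2*r-2*m+1).factorial : ℂ))) ∧
    (∀ m : ℕ, m ≤ r/2 - 1 →
      Matrix.trace (Φ (ppCh r ε ε * Pk r (2*m)))
        = ((2*r).factorial : ℂ) / (((2*m).factorial : ℂ) * ((2*r-2*m).factorial : ℂ))) ∧
    Matrix.trace (Φ (ppCh r ε ε * Pk r r))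
        = ((2*r).factorial : ℂ) / (2 * ((r.factorial : ℂ))^2) :=
  proj_traces_even_r_general r hr hre Φ ε hε

end
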